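/- arXiv:2205.11391 — 3 statements merged into one kernel-verified Lean document; each statement's English description precedes it below -/
import Mathlib

section
/- Let X be a topological space and let F : X × ℝ → [0, ∞] be a jointly lower semicontinuous function such that F(x, 0) = 0 for every x ∈ X, and such that for each x ∈ X the zero set of F(x, ·) is downward closed on [0, ∞): whenever 0 ≤ t ≤ t' and F(x, t') = 0, also F(x, t) = 0. Define s : X → [0, ∞] by s(x) = sup { t ≥ 0 : F(x, t) = 0 }. Then s is upper semicontinuous on X. -/
/-! If `s x < b`, then `F (x, b) > 0`; by lower semicontinuity this persists at `(y, b)` for `y`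
near `x`, and downward closedness of the zero set then forces `s y ≤ b`. -/

open scoped ENNReal

section ZeroSet

variable {g : ℝ → ℝ≥0∞}

theorem ofReal_le_iSup_zeroSet {t : ℝ} (ht : 0 ≤ t) (hgt : g t = 0) :
    ENNReal.ofReal t ≤ ⨆ t' ∈ {t' : ℝ | 0 ≤ t' ∧ g t' = 0}, ENNReal.ofReal t' :=
  le_iSup₂ (f := fun t' _ => ENNReal.ofReal t') t ⟨ht, hgt⟩

theorem iSup_zeroSet_le_ofReal (hdown : ∀ t t' : ℝ, 0 ≤ t → t ≤ t' → g t' = 0 → g t = 0)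
    {t : ℝ} (ht : 0 ≤ t) (hgt : g t ≠ 0) :
    ⨆ t' ∈ {t' : ℝ | 0 ≤ t' ∧ g t' = 0}, ENNReal.ofReal t' ≤ ENNReal.ofReal t :=
  iSup₂_le fun _ ht' => ENNReal.ofReal_le_ofReal <|
    le_of_not_gt fun hlt => hgt (hdown _ _ ht hlt.le ht'.2)

end ZeroSet

theorem upperSemicontinuous_sup_zeroSet_general
    {X : Type*} [TopologicalSpace X] (F : X × ℝ → ℝ≥0∞)
    (hF : LowerSemicontinuous F)
    (hdown : ∀ (x : X) (t t' : ℝ), 0 ≤ t → t ≤ t' → F (x, t') = 0 → F (x, t) = 0)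
    (s : X → ℝ≥0∞)
    (hs : ∀ x : X, s x = ⨆ t ∈ {t : ℝ | 0 ≤ t ∧ F (x, t) = 0}, ENNReal.ofReal t) :
    UpperSemicontinuous s := by
  intro x a hxa
  obtain ⟨b, hxb, hba⟩ := exists_between hxa
  set t := b.toReal
  have hbt : ENNReal.ofReal t = b := ENNReal.ofReal_toReal hba.ne_top
  have hFxt : F (x, t) ≠ 0 := fun h0 =>
    hxb.not_ge (hs x ▸ hbt ▸ ofReal_le_iSup_zeroSet ENNReal.toReal_nonneg h0)
  have hF_near : ∀ᶠ y in nhds x, 0 < F (y, t) :=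
    hF.comp (Continuous.prodMk_left t) x 0 (pos_iff_ne_zero.2 hFxt)
  filter_upwards [hF_near] with y hy
  calc s y ≤ ENNReal.ofReal t :=
        hs y ▸ iSup_zeroSet_le_ofReal (hdown y) ENNReal.toReal_nonneg hy.ne'
    _ = b := hbt
    _ < a := hba

/-- Abstract core of Proposition 2.1: the cut-parameter function
`s(x) = sup { t ≥ 0 : F(x, t) = 0 }` is upper semicontinuous whenever `F` is a jointly
lower semicontinuous `[0,∞]`-valued function with `F(x,0) = 0` whose zero set in the
`t`-variable is downward closed on `[0,∞)`. -/
theorem upperSemicontinuous_sup_zeroSet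
    {X : Type*} [TopologicalSpace X] (F : X × ℝ → ℝ≥0∞)
    (hF : LowerSemicontinuous F)
    (hF0 : ∀ x : X, F (x, 0) = 0)
    (hdown : ∀ (x : X) (t t' : ℝ), 0 ≤ t → t ≤ t' → F (x, t') = 0 → F (x, t) = 0)
    (s : X → ℝ≥0∞)
    (hs : ∀ x : X, s x = ⨆ t ∈ {t : ℝ | 0 ≤ t ∧ F (x, t) = 0}, ENNReal.ofReal t) :
    UpperSemicontinuous s :=
  upperSemicontinuous_sup_zeroSet_general F hF hdown s hs
end

section
/- Let E be a connected, locally path-connected topological space, let S ⊆ E be a path-connected, locally path-connected subspace with inclusion map i : S → E, and let x ∈ S. Let p : Ẽ → E be a covering map with Ẽ path-connected, and let x̂ ∈ p⁻¹(x) be such that p_*(π₁(Ẽ, x̂)) = i_*(π₁(S, x)) as subgroups of π₁(E, x). If p⁻¹(S) is path-connected, then i_* : π₁(S, x) → π₁(E, x) is surjective. -/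
open CategoryTheory

universe u

/-- The homomorphism on fundamental groups induced by a continuous map. -/
noncomputable def piMap {X Y : Type u} [TopologicalSpace X] [TopologicalSpace Y]
    (f : C(X, Y)) (x : X) :
    Aut (FundamentalGroupoid.mk x) →* Aut (FundamentalGroupoid.mk (f x)) :=
  CategoryTheory.Functor.mapAut (X := FundamentalGroupoid.mk x)
    (FundamentalGroupoid.fundamentalGroupoidFunctor.map (X := TopCat.of X) (Y := TopCat.of Y) (TopCat.ofHom f))

section LoopAut

variable {X Y : Type u} [TopologicalSpace X] [TopologicalSpace Y] {x : X}

noncomputable abbrev loopAut (γ : Path x x) : Aut (FundamentalGroupoid.mk x) :=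
  (Groupoid.isoEquivHom _ _).symm ⟦γ⟧

theorem loopAut_surjective : Function.Surjective (loopAut (x := x)) := fun a => by
  obtain ⟨γ, hγ⟩ := Quotient.exists_rep (a.hom : Path.Homotopic.Quotient x x)
  exact ⟨γ, Aut.ext hγ⟩

theorem loopAut_trans (γ δ : Path x x) : loopAut (γ.trans δ) = loopAut δ * loopAut γ :=
  Aut.ext rfl

theorem piMap_loopAut (f : C(X, Y)) (γ : Path x x) :
    piMap f x (loopAut γ) = loopAut (γ.map f.continuous) :=
  Aut.ext rfl

end LoopAut

theorem IsCoveringMap.exists_path_map_eq {E E' : Type*} [TopologicalSpace E]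
    [TopologicalSpace E'] {p : E' → E} (hp : IsCoveringMap p) {x y : E} (γ : Path x y)
    {e : E'} (he : p e = x) :
    ∃ (e' : E') (Γ : Path e e'), ∀ t, p (Γ t) = γ t :=
  have hγe : γ 0 = p e := γ.source.trans he.symm
  ⟨_, ⟨hp.liftPath γ e hγe, hp.liftPath_zero _ _ hγe, rfl⟩,
    congr_fun (hp.liftPath_lifts _ _ hγe)⟩

/-- Lift `γ` from `e`, then return to `e` inside the path-connected `p ⁻¹' S`; the projection of
the return path is `σ`. -/
theorem IsCoveringMap.exists_loop_map_eq_trans {E E' : Type*} [TopologicalSpace E]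
    [TopologicalSpace E'] {p : E' → E} (hp : IsCoveringMap p) {S : Set E}
    (hpre : IsPathConnected (p ⁻¹' S)) {e : E'} (he : p e ∈ S) (γ : Path (p e) (p e)) :
    ∃ (Γ : Path e e) (σ : Path (⟨p e, he⟩ : S) ⟨p e, he⟩),
      Γ.map hp.continuous = γ.trans (σ.map continuous_subtype_val) := by
  obtain ⟨e', Λ, hΛ⟩ := hp.exists_path_map_eq γ rfl
  have he' : p e' = p e := by rw [← Λ.target, hΛ, γ.target]
  obtain ⟨δ, hδ⟩ := hpre.joinedIn e' (show p e' ∈ S from he' ▸ he) e he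
  let σ : Path (⟨p e, he⟩ : S) ⟨p e, he⟩ :=
    { toFun t := ⟨p (δ t), hδ t⟩
      continuous_toFun := (hp.continuous.comp δ.continuous).subtype_mk _
      source' := Subtype.ext (by simp [he'])
      target' := Subtype.ext (by simp) }
  refine ⟨Λ.trans δ, σ, Path.ext (funext fun t => ?_)⟩
  simp only [Path.map_coe, Function.comp_apply, Path.trans_apply]
  split_ifs <;> simp [hΛ, σ]

theorem inclusion_pi1_surjective_of_preimage_pathConnected_general
    {E E' : Type u} [TopologicalSpace E] [TopologicalSpace E']
    (S : Set E)
    (p : E' → E) (hp : IsCoveringMap p)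
    (xh : E') (hmem : p xh ∈ S)
    (hrange : (piMap ⟨p, hp.continuous⟩ xh).range
      = (piMap ⟨(Subtype.val : S → E), continuous_subtype_val⟩ ⟨p xh, hmem⟩).range)
    (hpre : IsPathConnected (p ⁻¹' S)) :
    Function.Surjective
      (piMap ⟨(Subtype.val : S → E), continuous_subtype_val⟩ ⟨p xh, hmem⟩) := by
  intro a
  obtain ⟨γ, rfl⟩ := loopAut_surjective a
  obtain ⟨Γ, σ, hΓσ⟩ := hp.exists_loop_map_eq_trans hpre hmem γ
  have hσγ : piMap ⟨Subtype.val, continuous_subtype_val⟩ _ (loopAut σ) * loopAut γ ∈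
      (piMap ⟨p, hp.continuous⟩ xh).range := by
    refine ⟨loopAut Γ, ?_⟩
    rw [piMap_loopAut, piMap_loopAut, ← loopAut_trans]
    exact congrArg loopAut hΓσ
  rw [hrange] at hσγ
  exact (Subgroup.mul_mem_cancel_left _ (MonoidHom.mem_range.mpr ⟨loopAut σ, rfl⟩)).mp hσγ

/-- Proposition 3.1(2): for the Hawking cover `p : E' → E` associated to the subgroup
`i_*π₁(S, x)` of `π₁(E, x)`, if `p⁻¹(S)` is path-connected then
`i_* : π₁(S, x) → π₁(E, x)` is onto. -/
theorem inclusion_pi1_surjective_of_preimage_pathConnected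
    {E E' : Type u} [TopologicalSpace E] [TopologicalSpace E']
    [ConnectedSpace E] [LocallyPathConnectedSpace E]
    (S : Set E) (hSpc : IsPathConnected S) [LocallyPathConnectedSpace S]
    (p : E' → E) (hp : IsCoveringMap p) [PathConnectedSpace E']
    (xh : E') (hmem : p xh ∈ S)
    (hrange : (piMap ⟨p, hp.continuous⟩ xh).range
      = (piMap ⟨(Subtype.val : S → E), continuous_subtype_val⟩ ⟨p xh, hmem⟩).range)
    (hpre : IsPathConnected (p ⁻¹' S)) :
    Function.Surjective
      (piMap ⟨(Subtype.val : S → E), continuous_subtype_val⟩ ⟨p xh, hmem⟩) :=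
  inclusion_pi1_surjective_of_preimage_pathConnected_general S p hp xh hmem hrange hpre
end

section
/- Let V and M be connected, locally path-connected topological spaces, let ι : V → M be a topological embedding, and let v₀ ∈ V be such that ι_* : π₁(V, v₀) → π₁(M, ι(v₀)) is injective. Let p : Ṽ → V and P : M̃ → M be covering maps with Ṽ and M̃ path-connected, let x̃ ∈ p⁻¹(v₀) and ã ∈ P⁻¹(ι(v₀)), and suppose P_*(π₁(M̃, ã)) = (ι ∘ p)_*(π₁(Ṽ, x̃)) as subgroups of π₁(M, ι(v₀)). Let ψ̄ : Ṽ → M̃ be a continuous map with P ∘ ψ̄ = ι ∘ p and ψ̄(x̃) = ã. Then ψ̄ is injective. -/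
open CategoryTheory

universe u

/-- Transport of fundamental groups along an equality of basepoints. -/
noncomputable def pi1Cast {X : Type u} [TopologicalSpace X] {a b : X} (h : a = b) :
    Aut (FundamentalGroupoid.mk a) ≃* Aut (FundamentalGroupoid.mk b) := by
  subst h; exact MulEquiv.refl _

/-!
Suppose `ψ̄ y₁ = ψ̄ y₂`; then `p y₁ = p y₂` because `ι` is injective. Join `x̃` to `y₁` and
`y₂` by paths `g₁`, `g₂`. The loop `ψ̄(g₁) · ψ̄(g₂)⁻¹` at `ã` projects under `P` into
`(ι ∘ p)_* π₁(Ṽ, x̃)`, so for some loop `d` at `x̃` the paths `ι ∘ p ∘ g₁` and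
`ι ∘ p ∘ (d · g₂)` are homotopic. As `ι_*` is injective, so are `p ∘ g₁` and `p ∘ (d · g₂)`,
and by homotopy lifting through the covering `p` their lifts from `x̃`, namely `g₁` and
`d · g₂`, have the same endpoint: `y₁ = y₂`.
-/

open FundamentalGroupoid

theorem CategoryTheory.Functor.map_injective_of_mapAut_injective {C D : Type*} [Groupoid C]
    [Category D] (F : C ⥤ D) {x : C} (hF : Function.Injective (F.mapAut x)) (y : C) :
    Function.Injective (F.map : (x ⟶ y) → (F.obj x ⟶ F.obj y)) := by
  intro f g hfg
  have hloop : asIso (f ≫ CategoryTheory.inv g) = Iso.refl x :=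
    hF (Iso.ext (show F.map (f ≫ CategoryTheory.inv g) = F.map (𝟙 x) by simp [hfg]))
  simpa using congrArg Iso.hom hloop

theorem FundamentalGroupoid.map_comp_map {X Y Z : Type*} [TopologicalSpace X]
    [TopologicalSpace Y] [TopologicalSpace Z] (f : C(X, Y)) (g : C(Y, Z))
    {a b : FundamentalGroupoid X} (γ : a ⟶ b) :
    (map (g.comp f)).map γ = (map g).map ((map f).map γ) :=
  Path.Homotopic.Quotient.map_comp

theorem IsCoveringMap.eq_of_map_comp_eqToHom_eq {E X : Type*} [TopologicalSpace E]
    [TopologicalSpace X] {p : C(E, X)} (hp : IsCoveringMap p) {a b₁ b₂ : FundamentalGroupoid E}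
    (γ₁ : a ⟶ b₁) (γ₂ : a ⟶ b₂) (hb : (map p).obj b₁ = (map p).obj b₂)
    (h : (map p).map γ₁ ≫ eqToHom hb = (map p).map γ₂) :
    b₁ = b₂ := by
  obtain ⟨e⟩ := a
  obtain ⟨y₁⟩ := b₁
  obtain ⟨y₂⟩ := b₂
  have hy : p y₁ = p y₂ := congrArg FundamentalGroupoid.as hb
  have hcast : γ₁.map p = (γ₂.map p).cast rfl hy := by
    rw [← conj_eqToHom]
    simp only [eqToHom_refl, Category.id_comp]
    exact (comp_eqToHom_iff _ _ _).1 h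
  have hlift : hp.monodromy (γ₂.map p) ⟨e, rfl⟩ = ⟨y₁, hy⟩ :=
    hp.monodromy_eq_of_map_eq γ₁ hcast
  exact congrArg (FundamentalGroupoid.mk ∘ Subtype.val)
    (hlift.symm.trans (hp.monodromy_map γ₂))

theorem exists_loop_map_comp_eq_of_range_le {Vt Mt M : Type u} [TopologicalSpace Vt]
    [TopologicalSpace Mt] [TopologicalSpace M] (P : C(Mt, M)) (ψ : C(Vt, Mt)) {f : C(Vt, M)}
    (hf : ∀ y, P (ψ y) = f y) {x : Vt}
    (hrange : (piMap P (ψ x)).range.map (pi1Cast (hf x)).toMonoidHom ≤ (piMap f x).range)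
    {y₁ y₂ : Vt} (hψ : ψ y₁ = ψ y₂) (g₁ : mk x ⟶ mk y₁) (g₂ : mk x ⟶ mk y₂) :
    ∃ d : mk x ⟶ mk x, (map f).map (d ≫ g₂) = (map f).map g₁ ≫
      eqToHom (congrArg mk ((hf y₁).symm.trans ((congrArg P hψ).trans (hf y₂)))) := by
  obtain rfl : P.comp ψ = f := ContinuousMap.ext hf
  -- Object equalities are stated via `(map ψ).obj` so that `eqToHom` composes with `(map ψ).map _`
  -- syntactically, which `simp` and `rw` need.
  have hψ' : (map ψ).obj (mk y₁) = (map ψ).obj (mk y₂) := congrArg mk hψ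
  obtain ⟨ℓ, hℓ⟩ : ∃ ℓ : (map ψ).obj (mk x) ⟶ (map ψ).obj (mk x),
      ℓ ≫ (map ψ).map g₂ = (map ψ).map g₁ ≫ eqToHom hψ' :=
    ⟨(map ψ).map g₁ ≫ eqToHom hψ' ≫ Groupoid.inv ((map ψ).map g₂), by simp [-map_map]⟩
  obtain ⟨d, hd⟩ := hrange ⟨_, ⟨(Groupoid.isoEquivHom _ _).symm ℓ, rfl⟩, rfl⟩
  have hdℓ : (map P).map ((map ψ).map d.hom) = (map P).map ℓ :=
    (map_comp_map ψ P d.hom).symm.trans (congrArg Iso.hom hd)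
  have hPℓ := congrArg (map P).map hℓ
  rw [Functor.map_comp, Functor.map_comp, eqToHom_map, ← hdℓ] at hPℓ
  refine ⟨d.hom, ?_⟩
  rw [Functor.map_comp, map_comp_map, map_comp_map, map_comp_map]
  exact hPℓ

theorem lift_injective_general
    {V M Vt Mt : Type u} [TopologicalSpace V] [TopologicalSpace M]
    [TopologicalSpace Vt] [TopologicalSpace Mt]
    (iota : V → M) (hiota_cont : Continuous iota) (hiota : Topology.IsEmbedding iota)
    (p : Vt → V) (hp : IsCoveringMap p) [PathConnectedSpace Vt]
    (P : Mt → M) (hP : IsCoveringMap P)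
    (xt : Vt)
    (hinj : Function.Injective (piMap ⟨iota, hiota_cont⟩ (p xt)))
    (at_ : Mt) (hat : P at_ = iota (p xt))
    (hrange : Subgroup.map (pi1Cast hat).toMonoidHom (piMap ⟨P, hP.continuous⟩ at_).range
      = (piMap ((⟨iota, hiota_cont⟩ : C(V, M)).comp ⟨p, hp.continuous⟩) xt).range)
    (psib : Vt → Mt) (hpsib_cont : Continuous psib)
    (hcomm : ∀ y : Vt, P (psib y) = iota (p y))
    (hbase : psib xt = at_) :
    Function.Injective psib := by
  subst hbase
  intro y₁ y₂ hψ
  set pC : C(Vt, V) := ⟨p, hp.continuous⟩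
  set ιC : C(V, M) := ⟨iota, hiota_cont⟩
  have hpy : (map pC).obj (mk y₁) = (map pC).obj (mk y₂) :=
    congrArg mk <| hiota.injective <| (hcomm y₁).symm.trans ((congrArg P hψ).trans (hcomm y₂))
  let g : ∀ y, mk xt ⟶ mk y := fun y => ⟦PathConnectedSpace.somePath xt y⟧
  obtain ⟨d, hd⟩ := exists_loop_map_comp_eq_of_range_le ⟨P, hP.continuous⟩ ⟨psib, hpsib_cont⟩
    (f := ιC.comp pC) hcomm hrange.le hψ (g y₁) (g y₂)
  have hV : (map pC).map (g y₁) ≫ eqToHom hpy = (map pC).map (d ≫ g y₂) := by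
    refine (map ιC).map_injective_of_mapAut_injective (x := (map pC).obj (mk xt)) hinj _ ?_
    rw [Functor.map_comp, eqToHom_map, ← map_comp_map, ← map_comp_map]
    exact hd.symm
  exact congrArg FundamentalGroupoid.as <| hp.eq_of_map_comp_eqToHom_eq (g y₁) (d ≫ g y₂) hpy hV

/-- Footnote of Section 3.2: the lift `ψ̄ : Ṽ → M̃` of `ι ∘ p` to the covering `P`,
chosen so that `P_*π₁(M̃, ã) = (ι ∘ p)_*π₁(Ṽ, x̃)`, is injective. -/
theorem lift_injective
    {V M Vt Mt : Type u} [TopologicalSpace V] [TopologicalSpace M]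
    [TopologicalSpace Vt] [TopologicalSpace Mt]
    [ConnectedSpace V] [LocallyPathConnectedSpace V]
    [ConnectedSpace M] [LocallyPathConnectedSpace M]
    (iota : V → M) (hiota_cont : Continuous iota) (hiota : Topology.IsEmbedding iota)
    (p : Vt → V) (hp : IsCoveringMap p) [PathConnectedSpace Vt]
    (P : Mt → M) (hP : IsCoveringMap P) [PathConnectedSpace Mt]
    (xt : Vt)
    (hinj : Function.Injective (piMap ⟨iota, hiota_cont⟩ (p xt)))
    (at_ : Mt) (hat : P at_ = iota (p xt))
    (hrange : Subgroup.map (pi1Cast hat).toMonoidHom (piMap ⟨P, hP.continuous⟩ at_).range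
      = (piMap ((⟨iota, hiota_cont⟩ : C(V, M)).comp ⟨p, hp.continuous⟩) xt).range)
    (psib : Vt → Mt) (hpsib_cont : Continuous psib)
    (hcomm : ∀ y : Vt, P (psib y) = iota (p y))
    (hbase : psib xt = at_) :
    Function.Injective psib :=
  lift_injective_general iota hiota_cont hiota p hp P hP xt hinj at_ hat hrange psib hpsib_cont
    hcomm hbase
end
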